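/- For every read-once expression tree T over the variables Fin n, the value of every subtree of T (in the field K of rational functions) does not lie in the constant subfield (the image of ℚ); in particular the value of every subtree is nonzero, so every division performed in the recursive evaluation of T is division by a nonzero element of K. -/

import Mathlib

/-- The four binary arithmetic operations labeling internal nodes. -/
inductive Op : Type
  | add | sub | mul | div
deriving DecidableEq, Repr

/-- An expression tree over variables `Fin n`: a full binary tree whose leaves
are labeled by variables and whose internal nodes carry an operation. -/
inductive ETree (n : ℕ) : Type
  | leaf (v : Fin n)
  | node (op : Op) (l r : ETree n)
deriving DecidableEq

/-- The field of rational functions in `n` variables over `ℚ`. -/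
abbrev K (n : ℕ) := FractionRing (MvPolynomial (Fin n) ℚ)

/-- The list of variables labeling the leaves, from left to right. -/
def leafList {n : ℕ} : ETree n → List (Fin n)
  | .leaf v => [v]
  | .node _ l r => leafList l ++ leafList r

/-- A tree is read-once (a *valid* expression) if each variable labels at most one leaf. -/
def ReadOnce {n : ℕ} (T : ETree n) : Prop := (leafList T).Nodup

/-- The set of variables labeling leaves of a tree. -/
def leafVars {n : ℕ} (T : ETree n) : Finset (Fin n) := (leafList T).toFinset

/-- The value of an expression tree in the field of rational functions. -/
noncomputable def val {n : ℕ} : ETree n → K n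
  | .leaf v => algebraMap (MvPolynomial (Fin n) ℚ) (K n) (MvPolynomial.X v)
  | .node .add l r => val l + val r
  | .node .sub l r => val l - val r
  | .node .mul l r => val l * val r
  | .node .div l r => val l / val r

/-- `IsSubtree t T` means `t` is a subtree of `T` (possibly `T` itself). -/
inductive IsSubtree {n : ℕ} : ETree n → ETree n → Prop
  | refl (T : ETree n) : IsSubtree T T
  | left {t l r : ETree n} {op : Op} : IsSubtree t l → IsSubtree t (.node op l r)
  | right {t l r : ETree n} {op : Op} : IsSubtree t r → IsSubtree t (.node op l r)

/-!
Differentiate with respect to a variable `x_v`. By induction on a read-once tree `T`,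
`∂_v (val T) ≠ 0` exactly when `v` labels a leaf of `T`: at a node at most one child involves
`x_v`, and for nonzero `a, b` with `∂ b = 0` (resp. `∂ a = 0`) each of `a ± b`, `a * b`, `a / b`
has nonzero derivative iff `∂ a ≠ 0` (resp. `∂ b ≠ 0`). Constants have derivative zero, so no
subtree value is constant. The partial derivatives extend from polynomials to rational
functions because a derivation `d` amounts to the ring hom `a ↦ a + ε d a` into dual numbers,
and ring homs extend along localizations.
-/

open TrivSqZeroExt

namespace Derivation

variable {R A : Type*} (K : Type*) [CommRing R] [CommRing A] [Algebra R A] [CommRing K]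
  [Algebra A K]

def toDualNumber (d : Derivation R A A) : A →+* DualNumber K where
  toFun a := inl (algebraMap A K a) + inr (algebraMap A K (d a))
  map_one' := by rw [map_one, map_one_eq_zero, map_zero, inr_zero, add_zero, inl_one]
  map_mul' a b := by
    ext
    · simp only [fst_add, fst_inl, fst_inr, fst_mul, add_zero, map_mul]
    · simp only [snd_add, snd_inl, snd_inr, fst_add, fst_inl, fst_inr, zero_add, add_zero,
        DualNumber.snd_mul, leibniz, smul_eq_mul, map_add, map_mul]
      ring
  map_zero' := by simp
  map_add' a b := by
    simp only [map_add, inl_add, inr_add]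
    abel

variable {K}

theorem fst_toDualNumber (d : Derivation R A A) (a : A) :
    fst (d.toDualNumber K a) = algebraMap A K a := by
  simp only [toDualNumber, RingHom.coe_mk, MonoidHom.coe_mk, OneHom.coe_mk, fst_add, fst_inl,
    fst_inr, add_zero]

theorem snd_toDualNumber (d : Derivation R A A) (a : A) :
    snd (d.toDualNumber K a) = algebraMap A K (d a) := by
  simp only [toDualNumber, RingHom.coe_mk, MonoidHom.coe_mk, OneHom.coe_mk, snd_add, snd_inl,
    snd_inr, zero_add]

variable (M : Submonoid A) [IsLocalization M K]

variable (K) in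
noncomputable def liftDualNumber (d : Derivation R A A) : K →+* DualNumber K :=
  IsLocalization.lift (M := M) (g := d.toDualNumber K) fun y => by
    rw [isUnit_iff_isUnit_fst, fst_toDualNumber]
    exact IsLocalization.map_units K y

theorem liftDualNumber_algebraMap (d : Derivation R A A) (a : A) :
    d.liftDualNumber K M (algebraMap A K a) = d.toDualNumber K a :=
  IsLocalization.lift_eq _ a

theorem fst_liftDualNumber (d : Derivation R A A) (x : K) : fst (d.liftDualNumber K M x) = x := by
  have : (fstHom ℤ K K).toRingHom.comp (d.liftDualNumber K M) = RingHom.id K :=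
    IsLocalization.ringHom_ext M <| RingHom.ext fun a => by
      simp [liftDualNumber_algebraMap, fst_toDualNumber]
  exact RingHom.congr_fun this x

theorem snd_liftDualNumber_algebraMap (d : Derivation R A A) (a : A) :
    snd (d.liftDualNumber K M (algebraMap A K a)) = algebraMap A K (d a) := by
  rw [liftDualNumber_algebraMap, snd_toDualNumber]

theorem snd_liftDualNumber_mul (d : Derivation R A A) (x y : K) :
    snd (d.liftDualNumber K M (x * y)) =
      x * snd (d.liftDualNumber K M y) + y * snd (d.liftDualNumber K M x) := by
  rw [map_mul, DualNumber.snd_mul, fst_liftDualNumber, fst_liftDualNumber, mul_comm y]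

variable [Algebra R K] [IsScalarTower R A K]

variable (K) in
noncomputable def extendLocalization (d : Derivation R A A) : Derivation R K K :=
  Derivation.mk'
    { toFun x := snd (d.liftDualNumber K M x)
      map_add' x y := by rw [map_add, snd_add]
      map_smul' r x := by
        rw [RingHom.id_apply, Algebra.smul_def, snd_liftDualNumber_mul,
          IsScalarTower.algebraMap_apply R A K, snd_liftDualNumber_algebraMap, map_algebraMap,
          map_zero, mul_zero, add_zero, ← IsScalarTower.algebraMap_apply, ← Algebra.smul_def] }
    (snd_liftDualNumber_mul M d)

theorem extendLocalization_algebraMap (d : Derivation R A A) (a : A) :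
    d.extendLocalization K M (algebraMap A K a) = algebraMap A K (d a) :=
  snd_liftDualNumber_algebraMap M d a

end Derivation

theorem Derivation.notMem_range_algebraMap {R F : Type*} [CommRing R] [CommRing F] [Algebra R F]
    (D : Derivation R F F) {x : F} (hx : D x ≠ 0) : x ∉ Set.range (algebraMap R F) := by
  rintro ⟨r, rfl⟩
  exact hx (D.map_algebraMap r)

def Op.apply {F : Type*} [DivisionRing F] : Op → F → F → F
  | .add => (· + ·)
  | .sub => (· - ·)
  | .mul => (· * ·)
  | .div => (· / ·)

section OpDerivation

variable {R F : Type*} [CommRing R] [Field F] [Algebra R F] (D : Derivation R F F) {a b : F}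

theorem Op.derivation_apply_eq_zero_iff_left (op : Op) (hb : b ≠ 0) (hDb : D b = 0) :
    D (op.apply a b) = 0 ↔ D a = 0 := by
  cases op
  · simp [Op.apply, hDb]
  · simp [Op.apply, hDb]
  · simp [Op.apply, D.leibniz, hDb, hb]
  · simp [Op.apply, D.leibniz_div_const _ _ hDb, hb]

theorem Op.derivation_apply_eq_zero_iff_right (op : Op) (ha : a ≠ 0) (hb : b ≠ 0)
    (hDa : D a = 0) : D (op.apply a b) = 0 ↔ D b = 0 := by
  cases op
  · simp [Op.apply, hDa]
  · simp [Op.apply, hDa]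
  · simp [Op.apply, D.leibniz, hDa, ha]
  · simp [Op.apply, D.leibniz_div, hDa, ha, hb]

end OpDerivation

section ETree

variable {n : ℕ}

theorem val_node (op : Op) (l r : ETree n) : val (.node op l r) = op.apply (val l) (val r) := by
  cases op <;> rfl

theorem leafVars_node (op : Op) (l r : ETree n) :
    leafVars (.node op l r) = leafVars l ∪ leafVars r :=
  List.toFinset_append

theorem leafVars_nonempty (T : ETree n) : (leafVars T).Nonempty := by
  induction T with
  | leaf v => exact ⟨v, List.mem_toFinset.2 (List.mem_singleton_self v)⟩
  | node op l r ihl _ => exact (leafVars_node op l r).symm ▸ ihl.mono Finset.subset_union_left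

theorem readOnce_node_iff {op : Op} {l r : ETree n} :
    ReadOnce (.node op l r) ↔ ReadOnce l ∧ ReadOnce r ∧ Disjoint (leafVars l) (leafVars r) := by
  rw [ReadOnce, leafList, List.nodup_append', leafVars, leafVars,
    List.disjoint_toFinset_iff_disjoint]
  rfl

theorem IsSubtree.trans {s t T : ETree n} (hst : IsSubtree s t) (htT : IsSubtree t T) :
    IsSubtree s T := by
  induction htT with
  | refl => exact hst
  | left _ ih => exact .left ih
  | right _ ih => exact .right ih

theorem IsSubtree.readOnce {t T : ETree n} (h : IsSubtree t T) (hT : ReadOnce T) :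
    ReadOnce t := by
  induction h with
  | refl => exact hT
  | left _ ih => exact ih (readOnce_node_iff.1 hT).1
  | right _ ih => exact ih (readOnce_node_iff.1 hT).2.1

end ETree

theorem derivation_val_eq_zero_iff {n : ℕ} {R : Type*} [CommRing R] [Algebra R (K n)]
    (D : Fin n → Derivation R (K n) (K n)) (hD : ∀ v w, D v (val (.leaf w)) = 0 ↔ w ≠ v)
    {T : ETree n} (hT : ReadOnce T) (v : Fin n) :
    D v (val T) = 0 ↔ v ∉ leafVars T := by
  induction T generalizing v with
  | leaf w => simp [hD, leafVars, leafList, eq_comm]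
  | node op l r ihl ihr =>
    obtain ⟨hl, hr, hdisj⟩ := readOnce_node_iff.1 hT
    have ne_zero {t : ETree n} (ih : ∀ v, D v (val t) = 0 ↔ v ∉ leafVars t) : val t ≠ 0 :=
      fun h0 => by
        obtain ⟨w, hw⟩ := leafVars_nonempty t
        exact (ih w).1 (by rw [h0, map_zero]) hw
    have hl0 := ne_zero (ihl hl)
    have hr0 := ne_zero (ihr hr)
    rw [val_node, leafVars_node, Finset.mem_union, not_or]
    by_cases hvr : v ∈ leafVars r
    · have hvl : v ∉ leafVars l := Finset.disjoint_right.1 hdisj hvr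
      rw [op.derivation_apply_eq_zero_iff_right _ hl0 hr0 ((ihl hl v).2 hvl), ihr hr]
      tauto
    · rw [op.derivation_apply_eq_zero_iff_left _ hr0 ((ihr hr v).2 hvr), ihl hl]
      tauto

open MvPolynomial in
theorem extendLocalization_pderiv_X_eq_zero_iff {n : ℕ} (v w : Fin n) :
    (pderiv v).extendLocalization (K n) (nonZeroDivisors (MvPolynomial (Fin n) ℚ))
      (algebraMap (MvPolynomial (Fin n) ℚ) (K n) (X w)) = 0 ↔ w ≠ v := by
  simp [Derivation.extendLocalization_algebraMap, pderiv_X, Pi.single_apply, eq_comm]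

/-- For every read-once expression tree `T`, the value of every subtree of `T` does not
lie in the constant subfield (the image of `ℚ`); in particular it is nonzero, so every
division performed in the evaluation of `T` is division by a nonzero element. -/
theorem subtree_value_not_constant (n : ℕ) (T : ETree n) (hT : ReadOnce T) :
    (∀ t : ETree n, IsSubtree t T →
      val t ∉ Set.range (algebraMap ℚ (K n)) ∧ val t ≠ 0) ∧
    (∀ l r : ETree n, IsSubtree (ETree.node Op.div l r) T → val r ≠ 0) := by
  let D v :=
    (MvPolynomial.pderiv v).extendLocalization (K n) (nonZeroDivisors (MvPolynomial (Fin n) ℚ))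
  have not_constant {t : ETree n} (ht : IsSubtree t T) :
      val t ∉ Set.range (algebraMap ℚ (K n)) ∧ val t ≠ 0 := by
    obtain ⟨w, hw⟩ := leafVars_nonempty t
    have hDt : D w (val t) ≠ 0 := fun h =>
      (derivation_val_eq_zero_iff D extendLocalization_pderiv_X_eq_zero_iff
        (ht.readOnce hT) w).1 h hw
    exact ⟨(D w).notMem_range_algebraMap hDt, fun h => hDt (by rw [h, map_zero])⟩
  exact ⟨fun t ht => not_constant ht,
    fun l r h => (not_constant ((IsSubtree.right (.refl r)).trans h)).2⟩
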